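/- A complex number λ is an eigenvalue of S acting on ℓ^∞(ℕ) — i.e., there exists a nonzero bounded complex sequence v with Σ_{j≥0} S_{i,j} v_j = λ v_i for all i ≥ 0 — if and only if the sequence (q_n(λ))_{n≥1} is bounded. In other words, the point spectrum of S on ℓ^∞(ℕ) equals {λ ∈ ℂ : (q_n(λ))_{n≥1} is bounded}. -/

import Mathlib

/-- Fibonacci sequence with `F 0 = 1`, `F 1 = 2`, `F (n+2) = F (n+1) + F n`. -/
def fibF : ℕ → ℕ
  | 0 => 1
  | 1 => 2
  | (n+2) => fibF (n+1) + fibF n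

lemma fibF_pos : ∀ n, 0 < fibF n
  | 0 => by simp [fibF]
  | 1 => by simp [fibF]
  | (n+2) => by
      have h1 := fibF_pos (n+1)
      simp only [fibF]
      omega

/-- Zeckendorf digits of `N` in the base `fibF`: `N = ∑ i, zeck N i * fibF i`,
with `zeck N i ∈ {0,1}` and no two consecutive `1`'s. -/
def zeck (N i : ℕ) : ℕ :=
  if h : N = 0 then 0
  else if i = Nat.findGreatest (fun j => fibF j ≤ N) N then 1
  else zeck (N - fibF (Nat.findGreatest (fun j => fibF j ≤ N) N)) i
termination_by N
decreasing_by
  exact Nat.sub_lt (Nat.pos_of_ne_zero h) (fibF_pos _)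

lemma zeck_eq_zero_of_lt : ∀ N, ∀ i, N < i → zeck N i = 0 := by
  intro N
  induction N using Nat.strong_induction_on with
  | _ N ih =>
    intro i hi
    rw [zeck]
    split
    · rfl
    · rename_i h
      have hkN : Nat.findGreatest (fun j => fibF j ≤ N) N ≤ N := Nat.findGreatest_le N
      rw [if_neg (by omega)]
      exact ih _ (Nat.sub_lt (Nat.pos_of_ne_zero h) (fibF_pos _)) i
        (lt_of_le_of_lt (Nat.sub_le _ _) hi)

lemma exists_break0 (N : ℕ) : ∃ i, ¬(zeck N (2*i+1) = 1 ∧ zeck N (2*i) = 0) := by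
  refine ⟨N + 1, ?_⟩
  have h : zeck N (2*(N+1)+1) = 0 := zeck_eq_zero_of_lt N _ (by omega)
  simp [h]

lemma exists_break1 (N : ℕ) : ∃ i, ¬(zeck N (2*i+2) = 1 ∧ zeck N (2*i+1) = 0) := by
  refine ⟨N + 1, ?_⟩
  have h : zeck N (2*(N+1)+2) = 0 := zeck_eq_zero_of_lt N _ (by omega)
  simp [h]

/-- The number `s` of `10`-blocks carried in the stochastic Fibonacci adding machine:
if the digits of `N` end with `00(10)^s` (case `ε₀ = 0`) or with `00(10)^s1`
(case `ε₀ = 1`), this returns `s`. -/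
def carryLen (N : ℕ) : ℕ :=
  if zeck N 0 = 0 then Nat.find (exists_break0 N) else Nat.find (exists_break1 N)

/-- `Pprod p t = p 1 * p 2 * ⋯ * p t`. -/
def Pprod (p : ℕ → ℝ) (t : ℕ) : ℝ := ∏ i ∈ Finset.Icc 1 t, p i

/-- The transition matrix `S` of the Fibonacci stochastic adding machine associated to
the probability sequence `p`:  `S N N = 1 - p 1`;  if the digits of `N` end with
`00(10)^s` then `S N (N+1) = p 1 ⋯ p (s+1)` and `S N (N+1-F (2m)) = p 1 ⋯ p m * (1 - p (m+1))`
for `1 ≤ m ≤ s`;  if the digits of `N` end with `00(10)^s1` then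
`S N (N+1) = p 1 ⋯ p (s+2)` and `S N (N+1-F (2m-1)) = p 1 ⋯ p m * (1 - p (m+1))` for
`1 ≤ m ≤ s+1`;  all other entries vanish. -/
noncomputable def Smat (p : ℕ → ℝ) (N M : ℕ) : ℝ :=
  (if M = N then 1 - p 1 else 0) +
  if zeck N 0 = 0 then
    (if M = N + 1 then Pprod p (carryLen N + 1) else 0) +
    ∑ m ∈ Finset.Icc 1 (carryLen N),
      (if M = N + 1 - fibF (2*m) then Pprod p m * (1 - p (m+1)) else 0)
  else
    (if M = N + 1 then Pprod p (carryLen N + 2) else 0) +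
    ∑ m ∈ Finset.Icc 1 (carryLen N + 1),
      (if M = N + 1 - fibF (2*m - 1) then Pprod p m * (1 - p (m+1)) else 0)

/-- `rr p n = r_n = p (⌊(n+1)/2⌋ + 1)`. -/
noncomputable def rr (p : ℕ → ℝ) (n : ℕ) : ℝ := p ((n+1)/2 + 1)

/-- `qF p z n = q_{F_n}(z)`. -/
noncomputable def qF (p : ℕ → ℝ) (z : ℂ) : ℕ → ℂ
  | 0 => (z - (1 - (p 1 : ℂ))) / (p 1 : ℂ)
  | 1 => (1 / (p 2 : ℂ)) * (qF p z 0) ^ 2 - (1 / (p 2 : ℂ) - 1)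
  | (n+2) => (1 / (rr p (n+2) : ℂ)) * qF p z (n+1) * qF p z n - (1 / (rr p (n+2) : ℂ) - 1)

/-- `qN p z N = q_N(z) = ∏ᵢ q_{F_i}(z)^{ε_i(N)}` where `(ε_i(N))` are the Zeckendorf
digits of `N`. -/
noncomputable def qN (p : ℕ → ℝ) (z : ℂ) (N : ℕ) : ℂ :=
  ∏ i ∈ Finset.range (N+1), (qF p z i) ^ (zeck N i)

/-!
The vector `(q_N(λ))_N` is itself an eigenvector of `S` for `λ`. The states reached from `N`
in one step, `N + 1` and `N + 1 - F_k`, differ from `N` only in the final carry block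
`00(10)^s` or `00(10)^s1` of its Zeckendorf digits, so `q_N`, `q_{N+1}` and `q_{N+1-F_k}` share
the factor contributed by the remaining digits, and the row equation reduces to an identity
between the `q_{F_i}` that follows from their defining recursion by induction on `s`.
Conversely, `S_{N,N+1} > 0` and `S_{N,M} = 0` for `M > N + 1`, so an eigenvector is determined
by its first entry and equals `v_0 · q`. Hence a nonzero bounded eigenvector exists exactly when
`q` is bounded.
-/

open Finset

lemma fibF_add_two (n : ℕ) : fibF (n + 2) = fibF (n + 1) + fibF n := rfl

/-- At `n = 0` the truncated `n - 1 = 0` turns this into `fibF 1 = fibF 0 + fibF 0`. -/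
lemma fibF_succ (n : ℕ) : fibF (n + 1) = fibF n + fibF (n - 1) := by
  cases n <;> rfl

lemma fibF_strictMono : StrictMono fibF :=
  strictMono_nat_of_lt_succ fun n => by
    have := fibF_pos (n - 1); rw [fibF_succ]; omega

lemma lt_fibF (n : ℕ) : n < fibF n := by
  induction n with
  | zero => exact fibF_pos 0
  | succ n ih => have := fibF_strictMono (Nat.lt_add_one n); omega

lemma exists_fibF_le_lt {N : ℕ} (hN : 0 < N) : ∃ k, fibF k ≤ N ∧ N < fibF (k + 1) := by
  have hex : ∃ k, N < fibF (k + 1) := ⟨N, (lt_fibF N).trans (fibF_strictMono N.lt_succ_self)⟩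
  refine ⟨Nat.find hex, ?_, Nat.find_spec hex⟩
  rcases Nat.eq_zero_or_pos (Nat.find hex) with h | h
  · rw [h]; exact hN
  · have := Nat.find_min hex (Nat.sub_one_lt h.ne')
    rwa [Nat.sub_add_cancel h, not_lt] at this

lemma fibF_greedy_induction {P : ℕ → Prop} (zero : P 0)
    (step : ∀ N k, fibF k ≤ N → N < fibF (k + 1) → P (N - fibF k) → P N) (N : ℕ) : P N := by
  induction N using Nat.strong_induction_on with
  | _ N ih =>
    rcases Nat.eq_zero_or_pos N with rfl | hN
    · exact zero
    · obtain ⟨k, h1, h2⟩ := exists_fibF_le_lt hN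
      exact step N k h1 h2 (ih _ (Nat.sub_lt hN (fibF_pos k)))

lemma zeck_zero (i : ℕ) : zeck 0 i = 0 := by
  rw [zeck, dif_pos rfl]

lemma zeck_eq_ite {N k : ℕ} (h1 : fibF k ≤ N) (h2 : N < fibF (k + 1)) (i : ℕ) :
    zeck N i = if i = k then 1 else zeck (N - fibF k) i := by
  have hk : Nat.findGreatest (fun j => fibF j ≤ N) N = k :=
    Nat.findGreatest_eq_iff.2 ⟨(lt_fibF k).le.trans h1, fun _ => h1,
      fun j hkj _ hj => (h2.trans_le (fibF_strictMono.monotone hkj)).not_ge hj⟩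
  rw [zeck, dif_neg ((fibF_pos k).trans_le h1).ne', hk]

def IsZeckDigits (ε : ℕ → ℕ) : Prop :=
  (∀ i, ε i ≤ 1) ∧ ∀ i, ε (i + 1) = 1 → ε i = 0

lemma zeck_eq_zero_of_lt_fibF {N i : ℕ} : N < fibF i → zeck N i = 0 := by
  induction N using fibF_greedy_induction generalizing i with
  | zero => exact fun _ => zeck_zero i
  | step N k h1 h2 ih =>
    intro hi
    have hik : i ≠ k := by rintro rfl; omega
    rw [zeck_eq_ite h1 h2, if_neg hik]
    exact ih (by omega)

lemma isZeckDigits_zeck (N : ℕ) : IsZeckDigits (zeck N) := by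
  induction N using fibF_greedy_induction with
  | zero => exact ⟨fun i => by simp [zeck_zero], fun i => by simp [zeck_zero]⟩
  | step N k h1 h2 ih =>
    have hrem : N - fibF k < fibF (k - 1) := by rw [fibF_succ] at h2; omega
    refine ⟨fun i => ?_, fun i hi => ?_⟩
    · rw [zeck_eq_ite h1 h2]; split_ifs
      exacts [le_rfl, ih.1 i]
    · rw [zeck_eq_ite h1 h2] at hi ⊢
      by_cases hk : i + 1 = k
      · rw [if_neg (by omega)]
        exact zeck_eq_zero_of_lt_fibF (by rwa [show i = k - 1 by omega])
      rw [if_neg hk] at hi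
      by_cases hi' : i = k
      · subst hi'
        rw [zeck_eq_zero_of_lt_fibF (hrem.trans (fibF_strictMono (by omega)))] at hi
        omega
      · rw [if_neg hi']; exact ih.2 i hi

lemma sum_range_zeck_mul_fibF {N K : ℕ} (hK : N < K) :
    ∑ i ∈ range K, zeck N i * fibF i = N := by
  induction N using fibF_greedy_induction generalizing K with
  | zero => simp [zeck_zero]
  | step N k h1 h2 ih =>
    have hrem : zeck (N - fibF k) k = 0 :=
      zeck_eq_zero_of_lt_fibF (by
        have := fibF_strictMono.monotone (Nat.sub_le k 1); rw [fibF_succ] at h2; omega)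
    have hterm : ∀ i, zeck N i * fibF i
        = (if i = k then fibF k else 0) + zeck (N - fibF k) i * fibF i := by
      intro i; rw [zeck_eq_ite h1 h2]; split_ifs with h <;> simp [h, hrem]
    have hkK : k < K := by have := lt_fibF k; omega
    rw [sum_congr rfl fun i _ => hterm i, sum_add_distrib, sum_ite_eq', if_pos (mem_range.2 hkK),
      ih (by omega)]
    omega

lemma sum_range_mul_fibF_lt {ε : ℕ → ℕ} (hε : IsZeckDigits ε) (K : ℕ) :
    ∑ i ∈ range K, ε i * fibF i < fibF K := by
  induction K using Nat.strong_induction_on with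
  | _ K ih =>
    rcases K with _ | K
    · exact fibF_pos 0
    rw [sum_range_succ, fibF_succ]
    rcases Nat.le_one_iff_eq_zero_or_eq_one.1 (hε.1 K) with h | h
    · have := ih K K.lt_succ_self; rw [h]; omega
    rcases K with _ | K
    · simp [h, fibF]
    rw [sum_range_succ, hε.2 K h, h]
    have := ih K (by omega)
    simp only [Nat.add_sub_cancel]
    omega

lemma zeck_sum_range_mul_fibF {ε : ℕ → ℕ} (hε : IsZeckDigits ε) {K : ℕ}
    (hK : ∀ i, K ≤ i → ε i = 0) (i : ℕ) : zeck (∑ j ∈ range K, ε j * fibF j) i = ε i := by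
  induction K generalizing ε i with
  | zero => rw [sum_range_zero, zeck_zero, hK i (Nat.zero_le i)]
  | succ K ih =>
    rw [sum_range_succ]
    rcases Nat.le_one_iff_eq_zero_or_eq_one.1 (hε.1 K) with h | h
    · rw [h, zero_mul, add_zero]
      exact ih hε (fun j hj => by rcases hj.eq_or_lt with rfl | hj <;> [exact h; exact hK j hj]) i
    set ε' : ℕ → ℕ := fun j => if j = K then 0 else ε j
    have hε' : IsZeckDigits ε' :=
      ⟨fun j => by simp only [ε']; split_ifs <;> [omega; exact hε.1 j],
        fun j hj => by
          simp only [ε'] at hj ⊢; split_ifs at hj ⊢ <;> first | rfl | omega | exact hε.2 j hj⟩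
    have hsum : ∑ j ∈ range K, ε j * fibF j = ∑ j ∈ range K, ε' j * fibF j :=
      sum_congr rfl fun j hj => by simp [ε', (mem_range.1 hj).ne]
    have hlt : ∑ j ∈ range K, ε j * fibF j < fibF (K - 1) := by
      rcases K with _ | K
      · simp [fibF]
      rw [sum_range_succ, hε.2 K h, zero_mul, add_zero]
      exact sum_range_mul_fibF_lt hε K
    have h2 : ∑ j ∈ range K, ε j * fibF j + fibF K < fibF (K + 1) := by
      rw [fibF_succ]; omega
    rw [h, one_mul, zeck_eq_ite (by omega) h2, Nat.add_sub_cancel, hsum,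
      ih hε' (fun j hj => by simp only [ε']; split_ifs <;> [rfl; exact hK j (by omega)])]
    simp only [ε']
    split_ifs with hj <;> [rw [hj, h]; rfl]

lemma zeck_splice (N : ℕ) {L : ℕ} {b : ℕ → ℕ} (hb : IsZeckDigits b) (hbL : b (L - 1) = 0)
    (i : ℕ) :
    zeck (N + ∑ j ∈ range L, b j * fibF j - ∑ j ∈ range L, zeck N j * fibF j) i
      = if i < L then b i else zeck N i := by
  set ε : ℕ → ℕ := fun i => if i < L then b i else zeck N i
  have hε : IsZeckDigits ε := by
    refine ⟨fun j => ?_, fun j hj => ?_⟩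
    · simp only [ε]; split_ifs
      exacts [hb.1 j, (isZeckDigits_zeck N).1 j]
    · simp only [ε] at hj ⊢
      by_cases h1 : j + 1 < L
      · rw [if_pos h1] at hj; rw [if_pos (by omega)]; exact hb.2 j hj
      rw [if_neg h1] at hj
      by_cases h2 : j < L
      · rw [if_pos h2, show j = L - 1 by omega]; exact hbL
      · rw [if_neg h2]; exact (isZeckDigits_zeck N).2 j hj
  have hvan : ∀ j, N + L + 1 ≤ j → ε j = 0 := fun j hj => by
    simp only [ε]; rw [if_neg (by omega)]; exact zeck_eq_zero_of_lt N j (by omega)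
  have hsum : ∑ j ∈ range (N + L + 1), ε j * fibF j
      = ∑ j ∈ range L, b j * fibF j + ∑ j ∈ Ico L (N + L + 1), zeck N j * fibF j := by
    rw [← sum_range_add_sum_Ico _ (by omega : L ≤ N + L + 1)]
    congr 1 <;> refine sum_congr rfl fun j hj => ?_
    · simp [ε, mem_range.1 hj]
    · simp [ε, (mem_Ico.1 hj).1]
  have hN := sum_range_zeck_mul_fibF (N := N) (K := N + L + 1) (by omega)
  rw [← sum_range_add_sum_Ico _ (by omega : L ≤ N + L + 1)] at hN
  rw [show N + ∑ j ∈ range L, b j * fibF j - ∑ j ∈ range L, zeck N j * fibF j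
      = ∑ j ∈ range (N + L + 1), ε j * fibF j by omega]
  exact zeck_sum_range_mul_fibF hε hvan i

/-- The block `(10)^k` written in positions `a ≤ i < ℓ`: ones at `ℓ - 1, ℓ - 3, …`. -/
def altDigits (a ℓ i : ℕ) : ℕ := if a ≤ i ∧ i < ℓ ∧ (i + ℓ) % 2 = 1 then 1 else 0

lemma isZeckDigits_altDigits (a ℓ : ℕ) : IsZeckDigits (altDigits a ℓ) :=
  ⟨fun i => by unfold altDigits; split_ifs <;> omega,
    fun i h => by unfold altDigits at h ⊢; rw [if_neg]; split_ifs at h; omega⟩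

lemma isZeckDigits_indicator (ℓ : ℕ) : IsZeckDigits fun i => if i = ℓ then 1 else 0 :=
  ⟨fun i => by dsimp only; split_ifs <;> omega,
    fun i h => by dsimp only at h ⊢; split_ifs at h ⊢ <;> omega⟩

lemma altDigits_add_two {a ℓ i : ℕ} (hi : i < ℓ) : altDigits a (ℓ + 2) i = altDigits a ℓ i := by
  unfold altDigits; congr 1; apply propext; omega

lemma altDigits_eq_zero {a ℓ i : ℕ} (h : ℓ ≤ i ∨ i < a) : altDigits a ℓ i = 0 := by
  unfold altDigits; rw [if_neg (by omega)]

lemma altDigits_eq_zero_of_even {a ℓ i : ℕ} (h : (i + ℓ) % 2 = 0) : altDigits a ℓ i = 0 := by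
  unfold altDigits; rw [if_neg (by omega)]

lemma altDigits_add_two_succ {a ℓ : ℕ} (ha : a ≤ ℓ + 1) : altDigits a (ℓ + 2) (ℓ + 1) = 1 := by
  unfold altDigits; rw [if_pos (by omega)]

lemma prod_range_pow_altDigits_add_two {M : Type*} [CommMonoid M] (x : ℕ → M) {a ℓ : ℕ}
    (ha : a ≤ ℓ + 1) :
    ∏ i ∈ range (ℓ + 2), x i ^ altDigits a (ℓ + 2) i
      = (∏ i ∈ range ℓ, x i ^ altDigits a ℓ i) * x (ℓ + 1) := by
  rw [prod_range_succ, prod_range_succ, prod_congr rfl fun i hi =>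
    by rw [altDigits_add_two (mem_range.1 hi)], altDigits_eq_zero_of_even (by omega),
    altDigits_add_two_succ ha, pow_zero, mul_one, pow_one]

lemma sum_range_altDigits_mul_fibF {a ℓ : ℕ} (ha : a ≤ ℓ + 1) (hpar : (a + ℓ) % 2 = 1) :
    ∑ i ∈ range ℓ, altDigits a ℓ i * fibF i + fibF (a - 1) = fibF ℓ := by
  induction ℓ using Nat.strong_induction_on with
  | _ ℓ ih =>
    rcases ha.eq_or_lt with rfl | ha
    · rw [sum_eq_zero fun i hi => by rw [altDigits_eq_zero (.inr (by simp at hi; omega)),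
        zero_mul], zero_add, Nat.add_sub_cancel]
    obtain rfl | ⟨ℓ, rfl⟩ : ℓ = 1 ∨ ∃ ℓ', ℓ = ℓ' + 2 := by
      rcases ℓ with _ | _ | ℓ <;> first | omega | simp
    · obtain rfl : a = 0 := by omega
      rfl
    rw [sum_range_succ, sum_range_succ, sum_congr rfl fun i hi =>
      by rw [altDigits_add_two (mem_range.1 hi)]]
    rw [altDigits_eq_zero_of_even (by omega), altDigits_add_two_succ (by omega), fibF_add_two,
      ← ih ℓ (by omega) (by omega) (by omega)]
    ring

/-- The position at which adding `1` to `N` leaves a digit `1`: the digits of `N` end with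
`00(10)^s` (`e = 0`) or `00(10)^s1` (`e = 1`), where `s = carryLen N` and `e = zeck N 0`. -/
def carryIndex (N : ℕ) : ℕ := 2 * carryLen N + zeck N 0

lemma zeck_zero_le_one (N : ℕ) : zeck N 0 ≤ 1 := (isZeckDigits_zeck N).1 0

lemma carryLen_spec (N : ℕ) :
    (∀ j < carryLen N, zeck N (2 * j + zeck N 0 + 1) = 1 ∧ zeck N (2 * j + zeck N 0) = 0) ∧
      ¬(zeck N (carryIndex N + 1) = 1 ∧ zeck N (carryIndex N) = 0) := by
  unfold carryIndex carryLen
  rcases Nat.le_one_iff_eq_zero_or_eq_one.1 (zeck_zero_le_one N) with h | h <;>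
    simp only [h, if_pos, if_neg one_ne_zero, add_zero]
  · exact ⟨fun j hj => not_not.1 (Nat.find_min (exists_break0 N) hj),
      Nat.find_spec (exists_break0 N)⟩
  · exact ⟨fun j hj => not_not.1 (Nat.find_min (exists_break1 N) hj),
      Nat.find_spec (exists_break1 N)⟩

lemma zeck_eq_altDigits {N i : ℕ} (hi : i < carryIndex N + 2) :
    zeck N i = altDigits (1 - zeck N 0) (carryIndex N) i := by
  obtain ⟨hblock, hbreak⟩ := carryLen_spec N
  have he := zeck_zero_le_one N
  have hε := isZeckDigits_zeck N
  unfold carryIndex at hi hbreak ⊢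
  set e := zeck N 0 with he_def
  set s := carryLen N
  have hlow : ∀ i < 2 * s + e, zeck N i = altDigits (1 - e) (2 * s + e) i := by
    intro i hi
    unfold altDigits
    rcases Nat.lt_or_ge i e with hie | hie
    · obtain rfl : i = 0 := by omega
      rw [if_pos (by omega)]; omega
    obtain ⟨h1, h0⟩ := hblock ((i - e) / 2) (by omega)
    rcases Nat.mod_two_eq_zero_or_one (i - e) with hpar | hpar
    · rw [if_neg (by omega), ← h0]; congr 1; omega
    · rw [if_pos (by omega), ← h1]; congr 1; omega
  have htop : zeck N (2 * s + e) = 0 := by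
    rcases Nat.eq_zero_or_pos (2 * s + e) with h | h
    · rw [h]; omega
    have h1 : zeck N (2 * s + e - 1) = 1 := by
      rw [hlow _ (by omega), altDigits, if_pos (by omega)]
    have h2 := hε.2 (2 * s + e - 1)
    rw [Nat.sub_add_cancel h] at h2
    have := hε.1 (2 * s + e)
    omega
  have htop' : zeck N (2 * s + e + 1) = 0 := by
    have := hε.1 (2 * s + e + 1); have := fun h => hbreak ⟨h, htop⟩; omega
  rcases Nat.lt_or_ge i (2 * s + e) with h | h
  · exact hlow i h
  rw [altDigits_eq_zero (.inl h)]
  obtain rfl | rfl : i = 2 * s + e ∨ i = 2 * s + e + 1 := by omega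
  exacts [htop, htop']

lemma sum_range_zeck_mul_fibF_carryIndex (N : ℕ) :
    ∑ i ∈ range (carryIndex N + 2), zeck N i * fibF i + 1 = fibF (carryIndex N) := by
  have he := zeck_zero_le_one N
  rw [sum_congr rfl fun i hi => by rw [zeck_eq_altDigits (mem_range.1 hi)]]
  conv_rhs => rw [← sum_range_altDigits_mul_fibF (a := 1 - zeck N 0) (by omega)
    (by unfold carryIndex; omega)]
  rw [eventually_constant_sum (fun i hi => by rw [altDigits_eq_zero (.inl hi), zero_mul])
    (by omega : carryIndex N ≤ carryIndex N + 2), show 1 - zeck N 0 - 1 = 0 by omega]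
  rfl

lemma zeck_succ (N i : ℕ) :
    zeck (N + 1) i
      = if i < carryIndex N + 2 then (if i = carryIndex N then 1 else 0) else zeck N i := by
  have hA := sum_range_zeck_mul_fibF_carryIndex N
  have hB : ∑ j ∈ range (carryIndex N + 2), (if j = carryIndex N then 1 else 0) * fibF j
      = fibF (carryIndex N) := by
    simp [ite_mul]
  rw [← zeck_splice N (isZeckDigits_indicator _) (by simp), hB]
  congr 1
  omega

lemma zeck_succ_sub_fibF (N : ℕ) {m : ℕ} (hm : m ≤ carryLen N + zeck N 0) (i : ℕ) :
    zeck (N + 1 - fibF (2 * m - zeck N 0)) i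
      = if i < carryIndex N + 2 then altDigits (2 * m + 1 - zeck N 0) (carryIndex N) i
        else zeck N i := by
  have he := zeck_zero_le_one N
  have hA := sum_range_zeck_mul_fibF_carryIndex N
  have hAN : ∑ j ∈ range (carryIndex N + 2), zeck N j * fibF j ≤ N := by
    have := sum_range_zeck_mul_fibF (N := N) (K := N + carryIndex N + 2) (by omega)
    rw [← sum_range_add_sum_Ico _ (by omega : carryIndex N + 2 ≤ N + carryIndex N + 2)] at this
    omega
  have hB := sum_range_altDigits_mul_fibF (a := 2 * m + 1 - zeck N 0) (ℓ := carryIndex N)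
    (by unfold carryIndex; omega) (by unfold carryIndex; omega)
  rw [← eventually_constant_sum (fun i hi => by rw [altDigits_eq_zero (.inl hi), zero_mul])
    (by omega : carryIndex N ≤ carryIndex N + 2),
    show 2 * m + 1 - zeck N 0 - 1 = 2 * m - zeck N 0 by omega] at hB
  rw [← zeck_splice N (isZeckDigits_altDigits _ _) (altDigits_eq_zero (.inl (by omega)))]
  congr 1
  omega

section QProducts

variable {p : ℕ → ℝ} {z : ℂ}

@[simp]
lemma qN_zero : qN p z 0 = 1 := by
  simp [qN, zeck_zero]

lemma qN_eq_prod_range {N K : ℕ} (hK : ∀ i, K ≤ i → zeck N i = 0) :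
    qN p z N = ∏ i ∈ range K, qF p z i ^ zeck N i := by
  have hvan : ∀ {A}, (∀ i, A ≤ i → zeck N i = 0) → ∀ i ≥ A, qF p z i ^ zeck N i = 1 :=
    fun h i hi => by rw [h i hi, pow_zero]
  rw [qN, ← eventually_constant_prod (hvan fun i hi => zeck_eq_zero_of_lt N i (by omega))
    (le_max_left (N + 1) K), eventually_constant_prod (hvan hK) (le_max_right _ _)]

lemma qN_splice {N M L : ℕ} {b : ℕ → ℕ} (h : ∀ i, zeck M i = if i < L then b i else zeck N i) :
    qN p z M = (∏ i ∈ range L, qF p z i ^ b i)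
      * ∏ i ∈ Ico L (N + L + 1), qF p z i ^ zeck N i := by
  rw [qN_eq_prod_range (K := N + L + 1) fun i hi => by
      rw [h, if_neg (by omega)]; exact zeck_eq_zero_of_lt N i (by omega),
    ← prod_range_mul_prod_Ico _ (by omega : L ≤ N + L + 1)]
  congr 1 <;> refine prod_congr rfl fun i hi => ?_
  · rw [h, if_pos (mem_range.1 hi)]
  · rw [h, if_neg (by simp at hi; omega)]

lemma Pprod_succ (p : ℕ → ℝ) (t : ℕ) : Pprod p (t + 1) = Pprod p t * p (t + 1) :=
  prod_Icc_succ_top (by omega) p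

@[simp]
lemma Pprod_zero (p : ℕ → ℝ) : Pprod p 0 = 1 := by
  simp [Pprod]

@[simp]
lemma Pprod_one (p : ℕ → ℝ) : Pprod p 1 = p 1 := by
  simp [Pprod]

lemma Pprod_ne_zero (hp : ∀ i, 1 ≤ i → p i ≠ 0) (t : ℕ) : Pprod p t ≠ 0 :=
  prod_ne_zero_iff.2 fun i hi => hp i (mem_Icc.1 hi).1

lemma qF_mul_qF_succ (hp : ∀ i, 1 ≤ i → p i ≠ 0) (n : ℕ) :
    qF p z n * qF p z (n + 1) = rr p (n + 2) * qF p z (n + 2) + 1 - rr p (n + 2) := by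
  have hr : (rr p (n + 2) : ℂ) ≠ 0 := Complex.ofReal_ne_zero.2 (hp _ (by omega))
  rw [qF]
  field_simp
  ring

lemma qF_zero_mul_self (hp : ∀ i, 1 ≤ i → p i ≠ 0) :
    qF p z 0 * qF p z 0 = p 2 * qF p z 1 + 1 - p 2 := by
  have hr : (p 2 : ℂ) ≠ 0 := Complex.ofReal_ne_zero.2 (hp 2 (by omega))
  have h1 : qF p z 1 = 1 / (p 2 : ℂ) * qF p z 0 ^ 2 - (1 / (p 2 : ℂ) - 1) := by simp only [qF]
  rw [h1]
  field_simp
  ring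

/-- The eigenvalue equation of row `N` divided by the factor of `q_N` from the digits above the
carry block; `2 * s + e` stands for `carryIndex N`. -/
lemma qF_block_identity (hp : ∀ i, 1 ≤ i → p i ≠ 0) {e : ℕ} (he : e ≤ 1) (s : ℕ) :
    (p 1 : ℂ) * qF p z 0 * ∏ i ∈ range (2 * s + e), qF p z i ^ altDigits (1 - e) (2 * s + e) i
      = (Pprod p (s + 1 + e) : ℂ) * qF p z (2 * s + e)
        + ∑ m ∈ Icc 1 (s + e), (Pprod p m : ℂ) * (1 - p (m + 1))
            * ∏ i ∈ range (2 * s + e), qF p z i ^ altDigits (2 * m + 1 - e) (2 * s + e) i := by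
  induction s with
  | zero =>
    interval_cases e
    · simp
    · simp [altDigits, Pprod_succ]
      linear_combination (p 1 : ℂ) * qF_zero_mul_self hp
  | succ s ih =>
    have hmul := qF_mul_qF_succ (z := z) hp (2 * s + e)
    have hr : rr p (2 * s + e + 2) = p (s + e + 2) := by unfold rr; congr 1; omega
    have htop : ∏ i ∈ range (2 * s + e + 2),
        qF p z i ^ altDigits (2 * (s + e + 1) + 1 - e) (2 * s + e + 2) i = 1 :=
      prod_eq_one fun i hi => by rw [altDigits_eq_zero (.inr (by simp at hi; omega)), pow_zero]
    rw [show s + 1 + e = s + e + 1 by omega] at ih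
    rw [show 2 * (s + 1) + e = 2 * s + e + 2 by omega, show s + 1 + 1 + e = s + e + 1 + 1 by omega,
      show s + 1 + e = s + e + 1 by omega, prod_range_pow_altDigits_add_two _ (by omega),
      sum_Icc_succ_top (by omega), htop, sum_congr rfl fun m hm => by
        rw [prod_range_pow_altDigits_add_two _ (by simp at hm; omega), ← mul_assoc],
      ← sum_mul, Pprod_succ p (s + e + 1)]
    rw [hr] at hmul
    push_cast
    linear_combination qF p z (2 * s + e + 1) * ih + (Pprod p (s + e + 1) : ℂ) * hmul

end QProducts

lemma eq_zero_of_sum_mul_eq_mul_self {R : Type*} [Semiring R] [NoZeroDivisors R]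
    {A : ℕ → ℕ → R} {μ : R} {w : ℕ → R} (hA : ∀ n, A n (n + 1) ≠ 0)
    (hw : ∀ n, ∑ j ∈ range (n + 2), A n j * w j = μ * w n) (h0 : w 0 = 0) (n : ℕ) : w n = 0 := by
  induction n using Nat.strong_induction_on with
  | _ n ih =>
    rcases n with _ | n
    · exact h0
    have h := hw n
    rw [sum_range_succ, sum_eq_zero fun j hj => by rw [ih j (by simp at hj; omega), mul_zero],
      zero_add, ih n (by omega), mul_zero] at h
    exact (mul_eq_zero.1 h).resolve_left (hA n)

section RowEquation

variable {p : ℕ → ℝ} {z : ℂ}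

lemma qN_carry (hp : ∀ i, 1 ≤ i → p i ≠ 0) (N : ℕ) :
    (p 1 : ℂ) * qF p z 0 * qN p z N
      = (Pprod p (carryLen N + 1 + zeck N 0) : ℂ) * qN p z (N + 1)
        + ∑ m ∈ Icc 1 (carryLen N + zeck N 0), (Pprod p m : ℂ) * (1 - p (m + 1))
            * qN p z (N + 1 - fibF (2 * m - zeck N 0)) := by
  have he := zeck_zero_le_one N
  have hvan : ∀ a, ∀ i ≥ carryIndex N, qF p z i ^ altDigits a (carryIndex N) i = 1 :=
    fun a i hi => by rw [altDigits_eq_zero (.inl hi), pow_zero]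
  set H := ∏ i ∈ Ico (carryIndex N + 2) (N + (carryIndex N + 2) + 1), qF p z i ^ zeck N i
  have hN : qN p z N
      = (∏ i ∈ range (carryIndex N), qF p z i ^ altDigits (1 - zeck N 0) (carryIndex N) i) * H := by
    rw [qN_splice fun i => by split_ifs with h; exacts [zeck_eq_altDigits h, rfl],
      eventually_constant_prod (hvan _) (by omega)]
  have hN1 : qN p z (N + 1) = qF p z (carryIndex N) * H := by
    rw [qN_splice (zeck_succ N)]
    simp only [pow_ite, pow_one, pow_zero, prod_ite_eq', mem_range, lt_add_iff_pos_right,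
      Nat.ofNat_pos, if_true]
    rfl
  have hNm : ∀ m ∈ Icc 1 (carryLen N + zeck N 0), qN p z (N + 1 - fibF (2 * m - zeck N 0))
      = (∏ i ∈ range (carryIndex N),
          qF p z i ^ altDigits (2 * m + 1 - zeck N 0) (carryIndex N) i) * H := fun m hm => by
    rw [qN_splice (zeck_succ_sub_fibF N (mem_Icc.1 hm).2),
      eventually_constant_prod (hvan _) (by omega)]
  rw [hN, hN1, sum_congr rfl fun m hm => by rw [hNm m hm, ← mul_assoc], ← sum_mul]
  unfold carryIndex
  linear_combination H * qF_block_identity (z := z) hp he (carryLen N)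

lemma Smat_apply (p : ℕ → ℝ) (N M : ℕ) :
    Smat p N M = (if M = N then 1 - p 1 else 0)
      + ((if M = N + 1 then Pprod p (carryLen N + 1 + zeck N 0) else 0)
        + ∑ m ∈ Icc 1 (carryLen N + zeck N 0),
            if M = N + 1 - fibF (2 * m - zeck N 0) then Pprod p m * (1 - p (m + 1)) else 0) := by
  rcases Nat.le_one_iff_eq_zero_or_eq_one.1 (zeck_zero_le_one N) with h | h <;> simp [Smat, h]

lemma Smat_eq_zero {N M : ℕ} (h : N + 1 < M) : Smat p N M = 0 := by
  have : ∀ k, M ≠ N + 1 - fibF k := fun k => by omega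
  simp [Smat_apply, this, show M ≠ N by omega, show M ≠ N + 1 by omega]

lemma Smat_succ_ne_zero (hp : ∀ i, 1 ≤ i → p i ≠ 0) (N : ℕ) : Smat p N (N + 1) ≠ 0 := by
  have : ∀ k, N + 1 ≠ N + 1 - fibF k := fun k => by have := fibF_pos k; omega
  simpa [Smat_apply, this] using Pprod_ne_zero hp _

lemma tsum_Smat_mul (w : ℕ → ℂ) (N : ℕ) :
    ∑' j, (Smat p N j : ℂ) * w j = ∑ j ∈ range (N + 2), (Smat p N j : ℂ) * w j :=
  tsum_eq_sum fun j hj => by rw [Smat_eq_zero (by simp at hj; omega), Complex.ofReal_zero, zero_mul]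

lemma sum_Smat_mul (w : ℕ → ℂ) (N : ℕ) :
    ∑ j ∈ range (N + 2), (Smat p N j : ℂ) * w j
      = (1 - p 1) * w N + ((Pprod p (carryLen N + 1 + zeck N 0) : ℂ) * w (N + 1)
        + ∑ m ∈ Icc 1 (carryLen N + zeck N 0), (Pprod p m : ℂ) * (1 - p (m + 1))
            * w (N + 1 - fibF (2 * m - zeck N 0))) := by
  have hlt : ∀ k, N + 1 - fibF k < N + 2 := fun k => by omega
  simp only [Smat_apply, Complex.ofReal_add, Complex.ofReal_sum, apply_ite Complex.ofReal,
    Complex.ofReal_zero, add_mul, sum_mul, ite_mul, zero_mul, sum_add_distrib]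
  rw [sum_comm (s := range (N + 2))]
  simp [sum_ite_eq', hlt, mul_assoc]

lemma sum_Smat_mul_qN (hp : ∀ i, 1 ≤ i → p i ≠ 0) (N : ℕ) :
    ∑ j ∈ range (N + 2), (Smat p N j : ℂ) * qN p z j = z * qN p z N := by
  have hq0 : (p 1 : ℂ) * qF p z 0 = z - (1 - p 1) := by
    have : (p 1 : ℂ) ≠ 0 := Complex.ofReal_ne_zero.2 (hp 1 le_rfl)
    simp only [qF]; field_simp
  rw [sum_Smat_mul, ← qN_carry hp]
  linear_combination qN p z N * hq0

lemma eq_mul_qN_of_tsum_Smat_mul (hp : ∀ i, 1 ≤ i → p i ≠ 0) {v : ℕ → ℂ}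
    (hv : ∀ i, ∑' j, (Smat p i j : ℂ) * v j = z * v i) (n : ℕ) : v n = v 0 * qN p z n := by
  refine sub_eq_zero.1 <| eq_zero_of_sum_mul_eq_mul_self (A := fun n j => (Smat p n j : ℂ))
    (w := fun n => v n - v 0 * qN p z n) (μ := z)
    (fun n => Complex.ofReal_ne_zero.2 (Smat_succ_ne_zero hp n)) (fun n => ?_)
    (by simp) n
  have h := hv n
  rw [tsum_Smat_mul] at h
  simp only [mul_sub, sum_sub_distrib, mul_left_comm _ (v 0), ← mul_sum, h, sum_Smat_mul_qN hp]

end RowEquation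

/-- A complex number `λ` is an eigenvalue of `S` acting on `ℓ∞(ℕ)`
(there is a nonzero bounded sequence `v` with `S v = λ v`) if and only if the sequence
`(q_n(λ))_{n ≥ 1}` is bounded; i.e. the point spectrum of `S` on `ℓ∞(ℕ)` equals
`{λ : (q_n(λ))_{n ≥ 1} is bounded}`. -/
theorem stmt9 (p : ℕ → ℝ) (hp : ∀ i, 1 ≤ i → 0 < p i ∧ p i ≤ 1) (lam : ℂ) :
    (∃ v : ℕ → ℂ, (∃ C : ℝ, ∀ i, ‖v i‖ ≤ C) ∧ (∃ i, v i ≠ 0) ∧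
      ∀ i : ℕ, ∑' j : ℕ, (Smat p i j : ℂ) * v j = lam * v i) ↔
    (∃ C : ℝ, ∀ n : ℕ, 1 ≤ n → ‖qN p lam n‖ ≤ C) := by
  have hp0 : ∀ i, 1 ≤ i → p i ≠ 0 := fun i hi => (hp i hi).1.ne'
  constructor
  · rintro ⟨v, ⟨C, hC⟩, ⟨i, hi⟩, hv⟩
    have hvq := eq_mul_qN_of_tsum_Smat_mul hp0 hv
    have hv0 : v 0 ≠ 0 := fun h => hi (by rw [hvq i, h, zero_mul])
    refine ⟨C / ‖v 0‖, fun n _ => ?_⟩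
    rw [le_div_iff₀ (norm_pos_iff.2 hv0), mul_comm, ← norm_mul, ← hvq n]
    exact hC n
  · rintro ⟨C, hC⟩
    refine ⟨qN p lam, ⟨max C 1, fun n => ?_⟩, ⟨0, by simp⟩,
      fun n => by rw [tsum_Smat_mul, sum_Smat_mul_qN hp0]⟩
    rcases n.eq_zero_or_pos with rfl | hn
    · simp
    · exact (hC n hn).trans (le_max_left _ _)
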